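/- arXiv:1405.0096 — 2 statements merged into one kernel-verified Lean document; each statement's English description precedes it below -/
import Mathlib

section
/- Let F = K_{2k}, let 𝓔_k be a perfect matching of F, let H_2 be an r_2-regular graph with r_2 ≥ 2, and let G = G[F,E_k,H_{uv}]. Let ζ, η be the two roots of (x − 2r_2 − 2)(x − m) − 2(m − 2) = 0. Then the multiset σ(Q(G)) consists exactly of: (i) each q ∈ σ(Q(H_{uv})) \ {m−2, ζ, η} with multiplicity k; (ii) the value m + 2k − 4 with multiplicity k; (iii) the two roots of (x − m − 4k + 4)(x − 2r_2 − 2) − 2(m − 2) = 0, each with multiplicity 1; (iv) the two roots of (x − m − 2k + 4)(x − 2r_2 − 2) − 2(m − 2) = 0, each with multiplicity k − 1. -/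
open Matrix BigOperators
open scoped Classical

/-- The adjacency matrix of a simple graph, with entries in `R`. -/
noncomputable def adjMat (R : Type*) [Zero R] [One R] {V : Type*} [Fintype V]
    (G : SimpleGraph V) : Matrix V V R :=
  Matrix.of fun x y => if G.Adj x y then (1 : R) else 0

/-- The degree of a vertex. -/
noncomputable def gdeg {V : Type*} [Fintype V] (G : SimpleGraph V) (x : V) : ℕ :=
  (Finset.univ.filter fun y => G.Adj x y).card

/-- `G` is `r`-regular. -/
def IsReg {V : Type*} [Fintype V] (G : SimpleGraph V) (r : ℕ) : Prop :=
  ∀ x, gdeg G x = r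

/-- The signless Laplacian matrix `Q(G) = D(G) + A(G)`. -/
noncomputable def qMat (R : Type*) [AddMonoidWithOne R] {V : Type*} [Fintype V]
    (G : SimpleGraph V) : Matrix V V R :=
  Matrix.diagonal (fun x => (gdeg G x : R)) + adjMat R G

/-- The adjacency spectrum, as the multiset of real roots (with multiplicity) of the
characteristic polynomial of the (real symmetric) adjacency matrix. -/
noncomputable def aSpec {V : Type*} [Fintype V] (G : SimpleGraph V) : Multiset ℝ :=
  (adjMat ℝ G).charpoly.roots

/-- The signless Laplacian spectrum. -/
noncomputable def qSpec {V : Type*} [Fintype V] (G : SimpleGraph V) : Multiset ℝ :=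
  (qMat ℝ G).charpoly.roots

/-- The `M`-coronal `Γ_M(x) = 1ᵀ (xI − M)⁻¹ 1`, the sum of the entries of `(xI − M)⁻¹`. -/
noncomputable def coronal {n R : Type*} [Fintype n] [DecidableEq n] [Field R]
    (M : Matrix n n R) (x : R) : R :=
  ∑ i, ∑ j, ((x • (1 : Matrix n n R) - M)⁻¹) i j

/-- Embeds a `P × P` matrix as a `V × V` matrix supported on the image of `g`, zero elsewhere.
If the vertices of `V` are ordered listing the image of `g` first, this is `diag(M, 0)`. -/
noncomputable def embedMatrix {P V R : Type*} [Fintype P] [AddCommMonoid R]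
    (g : P → V) (M : Matrix P P R) : Matrix V V R :=
  Matrix.of fun x y => ∑ px : P, ∑ py : P, if x = g px ∧ y = g py then M px py else 0

/-- The graph `H − v` obtained by deleting the vertex `v`. -/
def delVert {W : Type*} (H : SimpleGraph W) (v : W) : SimpleGraph {w : W // w ≠ v} :=
  H.comap Subtype.val

/-- The graph `H − {u,v}` obtained by deleting the two vertices `u, v`. -/
def delVert2 {W : Type*} (H : SimpleGraph W) (u v : W) :
    SimpleGraph {w : W // w ≠ u ∧ w ≠ v} :=
  H.comap Subtype.val

/-- The join `G₁ ∨ G₂` of two vertex-disjoint graphs: their disjoint union together with all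
edges between the two parts. -/
def sgJoin {α β : Type*} (G₁ : SimpleGraph α) (G₂ : SimpleGraph β) : SimpleGraph (α ⊕ β) where
  Adj x y :=
    match x, y with
    | Sum.inl a, Sum.inl b => G₁.Adj a b
    | Sum.inl _, Sum.inr _ => True
    | Sum.inr _, Sum.inl _ => True
    | Sum.inr a, Sum.inr b => G₂.Adj a b
  symm := by
    constructor
    rintro (a | a) (b | b) h
    · exact G₁.symm.symm _ _ h
    · trivial
    · trivial
    · exact G₂.symm.symm _ _ h
  loopless := by
    constructor
    rintro (a | a) h
    · exact G₁.loopless.irrefl a h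
    · exact G₂.loopless.irrefl a h

/-- The graph `G[F, V_k, H_v]` with `k` pockets: take one copy of `F` and `k` disjoint copies
of `H` (with specified vertex `v`), identifying the vertex `v` of the `i`-th copy with the
vertex `f i` of `F`.  The `i`-th copy of `H − v` is carried by `{i} × {w // w ≠ v}`. -/
def pocketGraph {V W : Type*} (F : SimpleGraph V) (H : SimpleGraph W) (v : W)
    {k : ℕ} (f : Fin k ↪ V) : SimpleGraph (V ⊕ (Fin k × {w : W // w ≠ v})) where
  Adj x y :=
    match x, y with
    | Sum.inl a, Sum.inl b => F.Adj a b
    | Sum.inl a, Sum.inr (i, w) => a = f i ∧ H.Adj v w.1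
    | Sum.inr (i, w), Sum.inl a => a = f i ∧ H.Adj v w.1
    | Sum.inr (i, w), Sum.inr (j, w') => i = j ∧ H.Adj w.1 w'.1
  symm := by
    constructor
    rintro (a | ⟨i, w⟩) (b | ⟨j, w'⟩) h
    · exact F.symm.symm _ _ h
    · exact h
    · exact h
    · exact ⟨h.1.symm, H.symm.symm _ _ h.2⟩
  loopless := by
    constructor
    rintro (a | ⟨i, w⟩) h
    · exact F.loopless.irrefl a h
    · exact H.loopless.irrefl _ h.2

/-- The graph `G[F, E_k, H_{uv}]` with `k` edge-pockets: take one copy of `F` and `k` disjoint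
copies of `H` (with specified edge `uv`), pasting the edge `uv` of the `i`-th copy onto the
edge `e_i = (a i)(b i)` of `F` (identifying `u` with `a i` and `v` with `b i`).  The `i`-th
copy of `H − {u,v}` is carried by `{i} × {w // w ≠ u ∧ w ≠ v}`. -/
def edgePocketGraph {V W : Type*} (F : SimpleGraph V) (H : SimpleGraph W) (u v : W)
    {k : ℕ} (a b : Fin k → V) :
    SimpleGraph (V ⊕ (Fin k × {w : W // w ≠ u ∧ w ≠ v})) where
  Adj x y :=
    match x, y with
    | Sum.inl s, Sum.inl t => F.Adj s t
    | Sum.inl s, Sum.inr (i, w) => (s = a i ∧ H.Adj u w.1) ∨ (s = b i ∧ H.Adj v w.1)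
    | Sum.inr (i, w), Sum.inl s => (s = a i ∧ H.Adj u w.1) ∨ (s = b i ∧ H.Adj v w.1)
    | Sum.inr (i, w), Sum.inr (j, w') => i = j ∧ H.Adj w.1 w'.1
  symm := by
    constructor
    rintro (s | ⟨i, w⟩) (t | ⟨j, w'⟩) h
    · exact F.symm.symm _ _ h
    · exact h
    · exact h
    · exact ⟨h.1.symm, H.symm.symm _ _ h.2⟩
  loopless := by
    constructor
    rintro (s | ⟨i, w⟩) h
    · exact F.loopless.irrefl s h
    · exact H.loopless.irrefl _ h.2

/-!
The vertices of `G[K_{2k}, 𝓔_k, H_{uv}]` split into the `2k` hubs of `K_{2k}` and `k` pockets, each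
a copy of `P = V(H) − {u, v}` joined to both ends of its matching edge.  In this splitting
`xI − Q(G)` has pocket block `I_k ⊗ (xI − Q(H)[P])`, so by the Schur complement the pockets enter
the hub block only through the coronal `Γ(x) = 1ᵀ(xI − Q(H)[P])⁻¹1`; as `H − {u,v}` is
`r₂`-regular, `Q(H)[P]` has constant row sums `c = 2r₂ + 2`, whence `(x − c) Γ(x) = m − 2`.
Listing the hubs matching edge by matching edge, the Schur complement is `[[A, B], [B, A]]` with
`A − B` scalar and `A + B` a scalar plus a rank-one matrix, so its determinant is explicit.  For
all but finitely many `x`, hence as characteristic polynomials,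
`Q_G(X) (X − c)^k = Q_P(X)^k (X − m − 2k + 4)^k ρ(X) τ(X)^(k−1)`,
with `ρ, τ` the quadratics of (iii) and (iv).  `H` itself is the case `k = 1`, which gives
`Q_H(X) (X − c) = Q_P(X) (X − m + 2)(X − ζ)(X − η)`; since `c` is a root of `Q_P`, cancelling
`X − c` and comparing roots yields the spectrum.
-/

open Polynomial
open scoped Kronecker

noncomputable def Matrix.pocketIncidence (K : Type*) [Zero K] [One K] {T ι : Type*}
    [DecidableEq ι] (π : T → ι) (P : Type*) : Matrix T (ι × P) K :=
  Matrix.of fun z q => if π z = q.1 then 1 else 0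

namespace Matrix

section Square

variable {n : Type*} [Fintype n] [DecidableEq n]

theorem eval_charpoly_eq_det_smul_one_sub {R : Type*} [CommRing R] (M : Matrix n n R) (x : R) :
    M.charpoly.eval x = (x • 1 - M).det := by
  rw [eval_charpoly, scalar_apply, smul_one_eq_diagonal]

theorem isRoot_charpoly_of_row_sum [Nonempty n] {R : Type*} [CommRing R] [IsDomain R]
    {M : Matrix n n R} {c : R} (hM : ∀ i, ∑ j, M i j = c) : M.charpoly.IsRoot c := by
  rw [IsRoot, eval_charpoly_eq_det_smul_one_sub, ← exists_mulVec_eq_zero_iff]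
  refine ⟨fun _ => 1, Function.ne_iff.2 ⟨Classical.arbitrary n, one_ne_zero⟩, ?_⟩
  ext i
  simp [mulVec, dotProduct, one_apply, hM]

theorem det_smul_one_add_vecMulVec {R : Type*} [CommRing R] (a : R) (x y : n → R) :
    (a • (1 : Matrix n n R) + vecMulVec x y).det
      = a ^ Fintype.card n + (y ⬝ᵥ x) * a ^ (Fintype.card n - 1) := by
  have h := eval_charpoly (vecMulVec (-x) y) a
  have hmat : a • (1 : Matrix n n R) + vecMulVec x y = scalar n a - vecMulVec (-x) y := by
    ext i j
    simp [vecMulVec_apply, one_apply, diagonal_apply]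
  rw [hmat, ← h, charpoly_vecMulVec]
  simp [dotProduct_comm]

theorem det_fromBlocks_eq_det_add_mul_det_sub {R : Type*} [CommRing R] (A B : Matrix n n R) :
    (fromBlocks A B B A).det = (A + B).det * (A - B).det := by
  have h : fromBlocks A B B A
      = fromBlocks 1 0 1 1 * fromBlocks (A + B) B 0 (A - B) * fromBlocks 1 0 (-1) 1 := by
    simp only [fromBlocks_multiply]
    congr 1 <;> simp
  rw [h, det_mul, det_mul, det_fromBlocks_zero₁₂, det_fromBlocks_zero₂₁, det_fromBlocks_zero₁₂]
  simp

theorem sub_mul_coronal_eq_card_of_row_sum {K : Type*} [Field K] {M : Matrix n n K} {c x : K}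
    (hM : ∀ i, ∑ j, M i j = c) (hx : IsUnit (x • (1 : Matrix n n K) - M).det) :
    (x - c) * coronal M x = Fintype.card n := by
  have hvec : (x • (1 : Matrix n n K) - M) *ᵥ (fun _ => 1) = (x - c) • fun _ => 1 := by
    ext i
    simp [mulVec, dotProduct, hM, one_apply]
  have hinv : (x • (1 : Matrix n n K) - M)⁻¹ *ᵥ ((x - c) • fun _ => 1) = fun _ => 1 := by
    rw [← hvec, mulVec_mulVec, nonsing_inv_mul _ hx, one_mulVec]
  have := congrArg (fun w => ∑ i, w i) hinv
  simp only [mulVec_smul, Pi.smul_apply, smul_eq_mul, ← Finset.mul_sum] at this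
  simpa [coronal, mulVec, dotProduct] using this

theorem det_smul_one_sub_const_sub_smul_sumElim [Nonempty n] {K : Type*} [Field K] (α γ : K) :
    (α • (1 : Matrix (n ⊕ n) (n ⊕ n) K) - of (fun _ _ => 1)
        - γ • of fun z y => if Sum.elim id id z = Sum.elim id id y then (1 : K) else 0).det
      = α ^ Fintype.card n * (α - 2 * γ) ^ (Fintype.card n - 1)
        * (α - 2 * γ - 2 * Fintype.card n) := by
  set A : Matrix n n K := (α - γ) • 1 - of fun _ _ => 1
  set B : Matrix n n K := -γ • 1 - of fun _ _ => 1
  have hblocks : α • (1 : Matrix (n ⊕ n) (n ⊕ n) K) - of (fun _ _ => 1)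
      - γ • (of fun z y => if Sum.elim id id z = Sum.elim id id y then (1 : K) else 0)
      = fromBlocks A B B A := by
    ext (i | i) (j | j) <;> by_cases h : i = j <;> simp [A, B, h] <;> ring
  have hsum : A + B = (α - 2 * γ) • 1 + vecMulVec (fun _ => -2) (fun _ => 1) := by
    ext i j
    by_cases h : i = j <;> simp [A, B, h, vecMulVec_apply] <;> ring
  have hdiff : A - B = α • 1 := by
    ext i j
    by_cases h : i = j <;> simp [A, B, h]
  obtain ⟨c, hc⟩ : ∃ c, Fintype.card n = c + 1 := Nat.exists_eq_add_one.2 Fintype.card_pos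
  rw [hblocks, det_fromBlocks_eq_det_add_mul_det_sub, hsum, hdiff, det_smul_one_add_vecMulVec,
    det_smul, det_one]
  simp [dotProduct, hc]
  ring

end Square

section Pockets

variable {T ι P K : Type*} [Fintype ι] [DecidableEq ι] [Fintype P] [Field K]

theorem pocketIncidence_mul_one_kronecker_mul_transpose (π : T → ι) (N : Matrix P P K) :
    pocketIncidence K π P * ((1 : Matrix ι ι K) ⊗ₖ N) * (pocketIncidence K π P)ᵀ
      = (∑ i, ∑ j, N i j) • of fun z y => if π z = π y then (1 : K) else 0 := by
  ext z y
  simp [pocketIncidence, mul_apply, Fintype.sum_prod_type, one_apply, Finset.sum_comm (γ := P)]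

variable [Fintype T] [DecidableEq T] [DecidableEq P]

theorem det_fromBlocks_pocketIncidence_one_kronecker (π : T → ι) (A : Matrix T T K)
    (N : Matrix P P K) (hN : IsUnit N.det) :
    (fromBlocks A (-pocketIncidence K π P) (-(pocketIncidence K π P)ᵀ) (1 ⊗ₖ N)).det
      = N.det ^ Fintype.card ι
        * (A - (∑ i, ∑ j, N⁻¹ i j) • of fun z y => if π z = π y then (1 : K) else 0).det := by
  have hdet : (1 ⊗ₖ N : Matrix (ι × P) (ι × P) K).det = N.det ^ Fintype.card ι := by
    simp [det_kronecker]
  have : Invertible (1 ⊗ₖ N : Matrix (ι × P) (ι × P) K) :=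
    invertibleOfIsUnitDet _ (hdet ▸ hN.pow _)
  rw [det_fromBlocks₂₂, hdet, invOf_eq_nonsing_inv, inv_kronecker, inv_one]
  simp only [Matrix.neg_mul, Matrix.mul_neg, neg_neg]
  rw [pocketIncidence_mul_one_kronecker_mul_transpose]

end Pockets

end Matrix

namespace Polynomial

variable {K : Type*} [Field K]

theorem eq_of_forall_eval_eq_of_eval_ne_zero [Infinite K] {p q r : K[X]} (hr : r ≠ 0)
    (h : ∀ x, r.eval x ≠ 0 → p.eval x = q.eval x) : p = q :=
  eq_of_infinite_eval_eq p q ((finite_setOfPred_isRoot hr).infinite_compl.mono fun x hx => h x hx)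

theorem X_sub_C_mul_X_sub_C_sub_C_eq [Infinite K] {a b d r s : K}
    (h : ∀ x, (x - a) * (x - b) - d = (x - r) * (x - s)) :
    (X - C a) * (X - C b) - C d = (X - C r) * (X - C s) :=
  Polynomial.funext fun x => by simpa using h x

theorem roots_eq_nsmul_sub_add_of_mul_eq {p q χ : K[X]} {c : K} {k : ℕ} {s t : Multiset K}
    (hχ : χ.IsRoot c) (hp0 : p ≠ 0) (hq0 : q ≠ 0)
    (hq : q * (X - C c) = χ * (s.map fun a => X - C a).prod)
    (hp : p * (X - C c) ^ k = χ ^ k * (t.map fun a => X - C a).prod) :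
    p.roots = k • (q.roots - s) + t := by
  obtain ⟨g, rfl⟩ := dvd_iff_isRoot.2 hχ
  have hq' : q = g * (s.map fun a => X - C a).prod :=
    mul_right_cancel₀ (X_sub_C_ne_zero c) (by rw [hq]; ring)
  have hp' : p = g ^ k * (t.map fun a => X - C a).prod :=
    mul_right_cancel₀ (pow_ne_zero k (X_sub_C_ne_zero c)) (by rw [hp, mul_pow]; ring)
  subst hq' hp'
  rw [roots_mul hq0, roots_mul hp0, roots_multiset_prod_X_sub_C, roots_multiset_prod_X_sub_C,
    roots_pow, add_tsub_cancel_right]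

end Polynomial

section Invariance

variable {V V' : Type*} [Fintype V] [Fintype V']

theorem gdeg_cast_eq_sum_adjMat {R : Type*} [NonAssocSemiring R] (G : SimpleGraph V) (x : V) :
    (gdeg G x : R) = ∑ y, adjMat R G x y := by
  simp [gdeg, adjMat, Finset.sum_boole]

theorem qMat_apply_iso {R : Type*} [NonAssocSemiring R] {G : SimpleGraph V} {G' : SimpleGraph V'}
    (e : G ≃g G') (x y : V) : qMat R G' (e x) (e y) = qMat R G x y := by
  have hdeg : (gdeg G' (e x) : R) = gdeg G x := by
    rw [gdeg_cast_eq_sum_adjMat, gdeg_cast_eq_sum_adjMat, ← e.toEquiv.sum_comp]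
    simp only [adjMat, Matrix.of_apply, RelIso.coe_fn_toEquiv, e.map_adj_iff]
  simp only [qMat, adjMat, Matrix.add_apply, Matrix.diagonal_apply, Matrix.of_apply,
    e.map_adj_iff, e.injective.eq_iff, hdeg]

variable [DecidableEq V] [DecidableEq V']

theorem charpoly_qMat_eq_of_iso {G : SimpleGraph V} {G' : SimpleGraph V'} (e : G ≃g G') :
    (qMat ℝ G').charpoly = (qMat ℝ G).charpoly := by
  rw [← Matrix.charpoly_reindex e.toEquiv]
  congr 1
  ext x y
  have := qMat_apply_iso (R := ℝ) e (e.symm x) (e.symm y)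
  rw [e.apply_symm_apply, e.apply_symm_apply] at this
  exact this

theorem qSpec_eq_roots_charpoly (G : SimpleGraph V) : qSpec G = (qMat ℝ G).charpoly.roots := by
  unfold qSpec
  congr!

end Invariance

section EdgePockets

variable {V V' W : Type*}

def SimpleGraph.Iso.edgePocketGraphCongr {F : SimpleGraph V} {F' : SimpleGraph V'}
    (f : F ≃g F') (H : SimpleGraph W) (u v : W) {k : ℕ} (a b : Fin k → V) :
    edgePocketGraph F H u v a b ≃g edgePocketGraph F' H u v (f ∘ a) (f ∘ b) where
  toEquiv := Equiv.sumCongr f.toEquiv (Equiv.refl _)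
  map_rel_iff' := by
    rintro (s | ⟨i, w⟩) (t | ⟨j, w'⟩) <;>
      simp [_root_.edgePocketGraph, f.injective.eq_iff, f.map_adj_iff]

variable {H : SimpleGraph W} {u v : W}

noncomputable def edgePocketGraphPerfectMatchingIso {k : ℕ} (a b : Fin k → Fin (2 * k))
    (hab : Function.Injective (Sum.elim a b)) :
    edgePocketGraph (⊤ : SimpleGraph (Fin (2 * k))) H u v a b
      ≃g edgePocketGraph (⊤ : SimpleGraph (Fin k ⊕ Fin k)) H u v Sum.inl Sum.inr := by
  let φ : Fin k ⊕ Fin k ≃ Fin (2 * k) :=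
    Equiv.ofBijective _ ((Fintype.bijective_iff_injective_and_card _).2 ⟨hab, by simp [two_mul]⟩)
  have ha : φ.symm ∘ a = Sum.inl := funext fun i => φ.symm_apply_eq.2 rfl
  have hb : φ.symm ∘ b = Sum.inr := funext fun i => φ.symm_apply_eq.2 rfl
  exact ha ▸ hb ▸ (SimpleGraph.Iso.completeGraph φ.symm).edgePocketGraphCongr H u v a b

noncomputable def edgePocketGraphFinOneIso (huv : u ≠ v) (hadj : H.Adj u v) :
    edgePocketGraph (⊤ : SimpleGraph (Fin 1 ⊕ Fin 1)) H u v Sum.inl Sum.inr ≃g H where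
  toFun := Sum.elim (Sum.elim (fun _ => u) fun _ => v) fun p => p.2.1
  invFun w :=
    if hu : w = u then Sum.inl (Sum.inl 0)
    else if hv : w = v then Sum.inl (Sum.inr 0) else Sum.inr (0, ⟨w, hu, hv⟩)
  left_inv := by
    rintro ((i | i) | ⟨i, w, hwu, hwv⟩)
    · simp [Fin.fin_one_eq_zero]
    · simp [Fin.fin_one_eq_zero, huv.symm]
    · simp [Fin.fin_one_eq_zero, hwu, hwv]
  right_inv w := by
    by_cases hu : w = u <;> by_cases hv : w = v <;> simp_all
  map_rel_iff' := by
    rintro ((i | i) | ⟨i, w⟩) ((j | j) | ⟨j, w'⟩) <;>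
      simp [edgePocketGraph, hadj, hadj.symm, H.adj_comm, Fin.fin_one_eq_zero]

variable [Fintype W] [DecidableEq W]

theorem Fintype.sum_eq_add_add_sum_subtype_ne_and_ne {M : Type*} [AddCommMonoid M] (huv : u ≠ v)
    (f : W → M) : ∑ x, f x = f u + f v + ∑ w : {w // w ≠ u ∧ w ≠ v}, f w := by
  have hpair : Finset.univ.filter (fun x => ¬(x ≠ u ∧ x ≠ v)) = {u, v} := by
    ext x
    simp only [Finset.mem_filter, Finset.mem_univ, true_and, Finset.mem_insert,
      Finset.mem_singleton]
    tauto
  rw [← Finset.sum_filter_not_add_sum_filter Finset.univ (fun x => x ≠ u ∧ x ≠ v), hpair,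
    Finset.sum_pair huv, Finset.sum_subtype _ (p := fun x => x ≠ u ∧ x ≠ v) (by simp)]

theorem Fintype.card_subtype_ne_and_ne (huv : u ≠ v) :
    Fintype.card {w // w ≠ u ∧ w ≠ v} = Fintype.card W - 2 := by
  have h : Finset.univ.filter (fun w : W => w ≠ u ∧ w ≠ v) = (Finset.univ.erase u).erase v := by
    ext w
    simp [and_comm]
  rw [Fintype.card_subtype, h, Finset.card_erase_of_mem (by simp [huv.symm]),
    Finset.card_erase_of_mem (Finset.mem_univ u), Finset.card_univ]
  rfl

variable (H u v) in
noncomputable def pocketQMat : Matrix {w // w ≠ u ∧ w ≠ v} {w // w ≠ u ∧ w ≠ v} ℝ :=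
  (qMat ℝ H).submatrix Subtype.val Subtype.val

theorem sum_pocketQMat_apply_of_isReg {r : ℕ} (huv : u ≠ v) (hu : ∀ w, w ≠ u → H.Adj u w)
    (hv : ∀ w, w ≠ v → H.Adj v w) (hreg : IsReg (delVert2 H u v) r)
    (w : {w // w ≠ u ∧ w ≠ v}) : ∑ w', pocketQMat H u v w w' = 2 * r + 2 := by
  have hdeg : (gdeg (delVert2 H u v) w : ℝ) = r := by rw [hreg w]
  have hdegH : (gdeg H w : ℝ) = 2 + gdeg (delVert2 H u v) w := by
    rw [gdeg_cast_eq_sum_adjMat, gdeg_cast_eq_sum_adjMat,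
      Fintype.sum_eq_add_add_sum_subtype_ne_and_ne huv]
    simp [adjMat, delVert2, H.adj_comm _ u, H.adj_comm _ v, hu w w.2.1, hv w w.2.2]
    ring
  have hadj : ∑ w' : {w // w ≠ u ∧ w ≠ v}, adjMat ℝ H w w' = r := by
    rw [← hdeg, gdeg_cast_eq_sum_adjMat]
    rfl
  simp only [pocketQMat, qMat, Matrix.submatrix_apply, Matrix.add_apply, Finset.sum_add_distrib,
    Matrix.diagonal_apply, Subtype.val_injective.eq_iff, Finset.sum_ite_eq, Finset.mem_univ,
    if_true, hdegH, hdeg, hadj]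
  ring

end EdgePockets

section CanonicalMatching

variable {W : Type*} {H : SimpleGraph W} {u v : W} {k : ℕ}

local notation "G" k => edgePocketGraph (⊤ : SimpleGraph (Fin k ⊕ Fin k)) H u v Sum.inl Sum.inr

theorem edgePocketGraph_top_adj_inl_inr (hu : ∀ w, w ≠ u → H.Adj u w)
    (hv : ∀ w, w ≠ v → H.Adj v w) (z : Fin k ⊕ Fin k) (i : Fin k) (w : {w // w ≠ u ∧ w ≠ v}) :
    (G k).Adj (Sum.inl z) (Sum.inr (i, w)) ↔ Sum.elim id id z = i := by
  rcases z with j | j <;> simp [edgePocketGraph, hu w w.2.1, hv w w.2.2]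

variable [Fintype W] [DecidableEq W]

theorem gdeg_edgePocketGraph_top_inl (hu : ∀ w, w ≠ u → H.Adj u w)
    (hv : ∀ w, w ≠ v → H.Adj v w) (z : Fin k ⊕ Fin k) :
    (gdeg (G k) (Sum.inl z) : ℝ) = 2 * k - 1 + Fintype.card {w // w ≠ u ∧ w ≠ v} := by
  rw [gdeg_cast_eq_sum_adjMat, Fintype.sum_sum_type, Fintype.sum_prod_type]
  have hhub : ∀ y, (G k).Adj (Sum.inl z) (Sum.inl y) ↔ z ≠ y := fun y => Iff.rfl
  have hne : ∀ y, (if z ≠ y then (1 : ℝ) else 0) = 1 - if z = y then 1 else 0 := fun y => by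
    split_ifs <;> simp_all
  simp only [adjMat, Matrix.of_apply, hhub, edgePocketGraph_top_adj_inl_inr hu hv, hne,
    Finset.sum_sub_distrib, Finset.sum_ite_eq, Finset.mem_univ, if_true, Finset.sum_const,
    Finset.card_univ, Fintype.card_sum, Fintype.card_fin]
  simp [two_mul]

theorem gdeg_edgePocketGraph_top_inr (huv : u ≠ v) (i : Fin k) (w : {w // w ≠ u ∧ w ≠ v}) :
    gdeg (G k) (Sum.inr (i, w)) = gdeg H w := by
  apply Nat.cast_injective (R := ℝ)
  rw [gdeg_cast_eq_sum_adjMat, gdeg_cast_eq_sum_adjMat, Fintype.sum_sum_type,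
    Fintype.sum_prod_type, Fintype.sum_eq_add_add_sum_subtype_ne_and_ne huv]
  simp [adjMat, edgePocketGraph, Fintype.sum_sum_type, ite_and, H.adj_comm]
  rw [Finset.sum_eq_single i (fun j _ hj => by simp [Ne.symm hj]) (by simp)]
  simp

theorem qMat_edgePocketGraph_top_eq_fromBlocks (huv : u ≠ v) (hu : ∀ w, w ≠ u → H.Adj u w)
    (hv : ∀ w, w ≠ v → H.Adj v w) :
    qMat ℝ (G k) = fromBlocks
      ((2 * k - 2 + Fintype.card {w // w ≠ u ∧ w ≠ v} : ℝ) • 1 + of fun _ _ => 1)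
      (pocketIncidence ℝ (Sum.elim id id) {w // w ≠ u ∧ w ≠ v})
      (pocketIncidence ℝ (Sum.elim id id) {w // w ≠ u ∧ w ≠ v})ᵀ
      (1 ⊗ₖ pocketQMat H u v) := by
  ext (z | ⟨i, w⟩) (y | ⟨j, w'⟩)
  · have hhub : (G k).Adj (Sum.inl z) (Sum.inl y) ↔ z ≠ y := Iff.rfl
    by_cases h : z = y
    · subst h
      simp [qMat, adjMat, gdeg_edgePocketGraph_top_inl hu hv]
      ring
    · simp [qMat, adjMat, hhub, h]
  · simp [qMat, adjMat, pocketIncidence, edgePocketGraph_top_adj_inl_inr hu hv]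
  · simp [qMat, adjMat, pocketIncidence, (G k).adj_comm (Sum.inr _),
      edgePocketGraph_top_adj_inl_inr hu hv]
  · by_cases hij : i = j
    · subst hij
      by_cases hww : w = w'
      · subst hww
        simp [pocketQMat, qMat, adjMat, gdeg_edgePocketGraph_top_inr huv]
      · simp [pocketQMat, qMat, adjMat, edgePocketGraph, hww, Subtype.val_injective.ne hww]
    · simp [pocketQMat, qMat, adjMat, edgePocketGraph, hij]

theorem det_smul_one_sub_qMat_edgePocketGraph_top [NeZero k] (huv : u ≠ v)
    (hu : ∀ w, w ≠ u → H.Adj u w) (hv : ∀ w, w ≠ v → H.Adj v w) (x : ℝ)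
    (hx : IsUnit (x • 1 - pocketQMat H u v).det) :
    let α := x - (2 * k - 2 + Fintype.card {w // w ≠ u ∧ w ≠ v})
    let γ := coronal (pocketQMat H u v) x
    (x • 1 - qMat ℝ (G k)).det
      = (x • 1 - pocketQMat H u v).det ^ k
        * (α ^ k * (α - 2 * γ) ^ (k - 1) * (α - 2 * γ - 2 * k)) := by
  intro α γ
  have hblocks : x • 1 - qMat ℝ (G k) = fromBlocks (α • 1 - of fun _ _ => 1)
      (-pocketIncidence ℝ (Sum.elim id id) {w // w ≠ u ∧ w ≠ v})
      (-(pocketIncidence ℝ (Sum.elim id id) {w // w ≠ u ∧ w ≠ v})ᵀ)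
      (1 ⊗ₖ (x • 1 - pocketQMat H u v)) := by
    rw [qMat_edgePocketGraph_top_eq_fromBlocks huv hu hv]
    ext (z | ⟨i, w⟩) (y | ⟨j, w'⟩)
    · by_cases h : z = y <;> simp [α, one_apply, h]
      ring
    · simp [one_apply]
    · simp [one_apply]
    · by_cases hij : i = j <;> by_cases hww : w = w' <;> simp [one_apply, hij, hww]
  rw [hblocks, det_fromBlocks_pocketIncidence_one_kronecker _ _ _ hx,
    det_smul_one_sub_const_sub_smul_sumElim, Fintype.card_fin]
  rfl

theorem charpoly_qMat_edgePocketGraph_top_mul [NeZero k] (huv : u ≠ v)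
    (hu : ∀ w, w ≠ u → H.Adj u w) (hv : ∀ w, w ≠ v → H.Adj v w) {c : ℝ}
    (hc : ∀ w, ∑ w', pocketQMat H u v w w' = c) :
    (qMat ℝ (G k)).charpoly * (X - C c) ^ k
      = (pocketQMat H u v).charpoly ^ k
        * ((X - C (2 * (k : ℝ) - 2 + Fintype.card {w // w ≠ u ∧ w ≠ v})) ^ k
          * ((X - C (2 * (k : ℝ) - 2 + Fintype.card {w // w ≠ u ∧ w ≠ v} + 2 * k)) * (X - C c)
            - C (2 * (Fintype.card {w // w ≠ u ∧ w ≠ v} : ℝ)))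
          * ((X - C (2 * (k : ℝ) - 2 + Fintype.card {w // w ≠ u ∧ w ≠ v})) * (X - C c)
            - C (2 * (Fintype.card {w // w ≠ u ∧ w ≠ v} : ℝ))) ^ (k - 1)) := by
  set p := (Fintype.card {w // w ≠ u ∧ w ≠ v} : ℝ)
  set a := 2 * k - 2 + p
  refine Polynomial.eq_of_forall_eval_eq_of_eval_ne_zero
    (Matrix.charpoly_monic (pocketQMat H u v)).ne_zero fun x hx => ?_
  rw [Matrix.eval_charpoly_eq_det_smul_one_sub] at hx
  have hunit := isUnit_iff_ne_zero.2 hx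
  have hγ := sub_mul_coronal_eq_card_of_row_sum hc hunit
  set γ := coronal (pocketQMat H u v) x
  have h₁ : (x - a - 2 * γ) * (x - c) = (x - a) * (x - c) - 2 * p := by
    linear_combination (-2) * hγ
  have h₂ : (x - a - 2 * γ - 2 * k) * (x - c) = (x - (a + 2 * k)) * (x - c) - 2 * p := by
    linear_combination (-2) * hγ
  obtain ⟨l, rfl⟩ := Nat.exists_eq_add_one_of_ne_zero (NeZero.ne k)
  simp only [eval_mul, eval_pow, eval_sub, eval_X, eval_C, Matrix.eval_charpoly_eq_det_smul_one_sub,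
    det_smul_one_sub_qMat_edgePocketGraph_top huv hu hv x hunit, Nat.add_sub_cancel]
  rw [← h₁, ← h₂, mul_pow]
  simp only [a, p]
  ring

theorem charpoly_qMat_edgePocketGraph_top_mul_of_isReg [NeZero k] {m r : ℕ}
    (hm : Fintype.card W = m) (huv : u ≠ v) (hu : ∀ w, w ≠ u → H.Adj u w)
    (hv : ∀ w, w ≠ v → H.Adj v w) (hreg : IsReg (delVert2 H u v) r) :
    (qMat ℝ (G k)).charpoly * (X - C (2 * (r : ℝ) + 2)) ^ k
      = (pocketQMat H u v).charpoly ^ k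
        * ((X - C ((m : ℝ) + 2 * k - 4)) ^ k
          * ((X - C ((m : ℝ) + 4 * k - 4)) * (X - C (2 * (r : ℝ) + 2)) - C (2 * ((m : ℝ) - 2)))
          * ((X - C ((m : ℝ) + 2 * k - 4)) * (X - C (2 * (r : ℝ) + 2))
            - C (2 * ((m : ℝ) - 2))) ^ (k - 1)) := by
  have h2m : 2 ≤ m := hm ▸ Fintype.one_lt_card_iff_nontrivial.2 ⟨u, v, huv⟩
  have hp : (Fintype.card {w // w ≠ u ∧ w ≠ v} : ℝ) = m - 2 := by
    rw [Fintype.card_subtype_ne_and_ne huv, hm, Nat.cast_sub h2m, Nat.cast_two]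
  have ha : 2 * (k : ℝ) - 2 + (m - 2) = m + 2 * k - 4 := by ring
  have hb : (m : ℝ) + 2 * k - 4 + 2 * k = m + 4 * k - 4 := by ring
  have := charpoly_qMat_edgePocketGraph_top_mul (k := k) huv hu hv
    (sum_pocketQMat_apply_of_isReg huv hu hv hreg)
  rwa [hp, ha, hb] at this

end CanonicalMatching

theorem signlessLap_spec_edgePocketGraph_completeGraph_perfectMatching_general
    {W : Type*} [Fintype W] [DecidableEq W]
    (m k r₂ : ℕ) (hk : 1 ≤ k) (hm : Fintype.card W = m) (hm3 : 3 ≤ m)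
    (H : SimpleGraph W) (u v : W) (huv : u ≠ v)
    (hdegu : ∀ w : W, w ≠ u → H.Adj u w) (hdegv : ∀ w : W, w ≠ v → H.Adj v w)
    (hreg2 : IsReg (delVert2 H u v) r₂)
    (a b : Fin k → Fin (2 * k))
    (hmatching : Function.Injective (Sum.elim a b : Fin k ⊕ Fin k → Fin (2 * k)))
    (ζ η ρ₁ ρ₂ τ₁ τ₂ : ℝ)
    (hζη : ∀ x : ℝ,
      (x - (2 * (r₂ : ℝ) + 2)) * (x - (m : ℝ)) - 2 * ((m : ℝ) - 2) = (x - ζ) * (x - η))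
    (hρ : ∀ x : ℝ,
      (x - ((m : ℝ) + 4 * (k : ℝ) - 4)) * (x - (2 * (r₂ : ℝ) + 2)) - 2 * ((m : ℝ) - 2)
        = (x - ρ₁) * (x - ρ₂))
    (hτ : ∀ x : ℝ,
      (x - ((m : ℝ) + 2 * (k : ℝ) - 4)) * (x - (2 * (r₂ : ℝ) + 2)) - 2 * ((m : ℝ) - 2)
        = (x - τ₁) * (x - τ₂)) :
    qSpec (edgePocketGraph (⊤ : SimpleGraph (Fin (2 * k))) H u v a b)
      = k • ((((qSpec H).erase ((m : ℝ) - 2)).erase ζ).erase η)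
        + Multiset.replicate k ((m : ℝ) + 2 * (k : ℝ) - 4)
        + {ρ₁, ρ₂}
        + (k - 1) • ({τ₁, τ₂} : Multiset ℝ) := by
  have : NeZero k := ⟨by omega⟩
  have : Nonempty {w // w ≠ u ∧ w ≠ v} :=
    Fintype.card_pos_iff.1 (by rw [Fintype.card_subtype_ne_and_ne huv]; omega)
  have hG := charpoly_qMat_edgePocketGraph_top_mul_of_isReg (k := k) hm huv hdegu hdegv hreg2
  have hH := charpoly_qMat_edgePocketGraph_top_mul_of_isReg (k := 1) hm huv hdegu hdegv hreg2
  have hζη' : ∀ x : ℝ, (x - ((m : ℝ) + 4 * ((1 : ℕ) : ℝ) - 4)) * (x - (2 * (r₂ : ℝ) + 2))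
      - 2 * ((m : ℝ) - 2) = (x - ζ) * (x - η) := fun x => by
    rw [← hζη x]
    ring
  rw [charpoly_qMat_eq_of_iso (edgePocketGraphPerfectMatchingIso a b hmatching),
    X_sub_C_mul_X_sub_C_sub_C_eq hρ, X_sub_C_mul_X_sub_C_sub_C_eq hτ] at hG
  rw [← charpoly_qMat_eq_of_iso (edgePocketGraphFinOneIso huv (hdegu v huv.symm)),
    X_sub_C_mul_X_sub_C_sub_C_eq hζη', pow_one, pow_one] at hH
  rw [qSpec_eq_roots_charpoly, qSpec_eq_roots_charpoly, roots_eq_nsmul_sub_add_of_mul_eq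
    (Matrix.isRoot_charpoly_of_row_sum (sum_pocketQMat_apply_of_isReg huv hdegu hdegv hreg2))
    (Matrix.charpoly_monic _).ne_zero (Matrix.charpoly_monic _).ne_zero
    (s := {(m : ℝ) - 2, ζ, η})
    (t := Multiset.replicate k ((m : ℝ) + 2 * k - 4) + {ρ₁, ρ₂} + (k - 1) • {τ₁, τ₂})
    (hH.trans ?_) (hG.trans ?_)]
  · simp [Multiset.sub_cons, add_assoc]
  · rw [show (m : ℝ) + 2 * ((1 : ℕ) : ℝ) - 4 = m - 2 by push_cast; ring]
    simp
  · congr 1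
    simp [Multiset.map_nsmul, Multiset.prod_nsmul]
    ring

/-- Theorem 4.5: `F = K_{2k}`, `𝓔_k` a perfect matching. -/
theorem signlessLap_spec_edgePocketGraph_completeGraph_perfectMatching
    {W : Type*} [Fintype W] [DecidableEq W]
    (m k r₂ : ℕ) (hk : 1 ≤ k) (hm : Fintype.card W = m) (hm3 : 3 ≤ m) (hr₂ : 2 ≤ r₂)
    (H : SimpleGraph W) (u v : W) (huv : u ≠ v)
    (hdegu : ∀ w : W, w ≠ u → H.Adj u w) (hdegv : ∀ w : W, w ≠ v → H.Adj v w)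
    (hreg2 : IsReg (delVert2 H u v) r₂)
    (a b : Fin k → Fin (2 * k))
    (hmatching : Function.Injective (Sum.elim a b : Fin k ⊕ Fin k → Fin (2 * k)))
    (ζ η ρ₁ ρ₂ τ₁ τ₂ : ℝ)
    (hζη : ∀ x : ℝ,
      (x - (2 * (r₂ : ℝ) + 2)) * (x - (m : ℝ)) - 2 * ((m : ℝ) - 2) = (x - ζ) * (x - η))
    (hρ : ∀ x : ℝ,
      (x - ((m : ℝ) + 4 * (k : ℝ) - 4)) * (x - (2 * (r₂ : ℝ) + 2)) - 2 * ((m : ℝ) - 2)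
        = (x - ρ₁) * (x - ρ₂))
    (hτ : ∀ x : ℝ,
      (x - ((m : ℝ) + 2 * (k : ℝ) - 4)) * (x - (2 * (r₂ : ℝ) + 2)) - 2 * ((m : ℝ) - 2)
        = (x - τ₁) * (x - τ₂)) :
    qSpec (edgePocketGraph (⊤ : SimpleGraph (Fin (2 * k))) H u v a b)
      = k • ((((qSpec H).erase ((m : ℝ) - 2)).erase ζ).erase η)
        + Multiset.replicate k ((m : ℝ) + 2 * (k : ℝ) - 4)
        + {ρ₁, ρ₂}
        + (k - 1) • ({τ₁, τ₂} : Multiset ℝ) :=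
  signlessLap_spec_edgePocketGraph_completeGraph_perfectMatching_general m k r₂ hk hm hm3 H u v huv
    hdegu hdegv hreg2 a b hmatching ζ η ρ₁ ρ₂ τ₁ τ₂ hζη hρ hτ
end

section
/- Let p ≥ 3, r_1 ≥ 2, m − 1 = p(r_1 − 1), let G_p^{r_1} = C_p □ K_{r_1−1}, and let G* = G[F,V_k,H_v*] with |V_k| = k, where H_v* is the join of a single vertex v with G_p^{r_1}. Then every eigenvalue λ_j(G_p^{r_1}), j = 1,…,m−2 (i.e., every adjacency eigenvalue of G_p^{r_1} counted with multiplicity, excluding one copy of the largest eigenvalue r_1), is an eigenvalue of A(G*) with multiplicity at least k; indeed, if X_s ⊗ Y_t is an eigenvector of A(G_p^{r_1}) for the eigenvalue λ_s(C_p) + λ_t(K_{r_1−1}) with X_s ⊗ Y_t not equal to the all-ones vector, then the k vectors supported on the k copies of G_p^{r_1}, each equal to X_s ⊗ Y_t on one copy and zero elsewhere, are linearly independent eigenvectors of A(G*) for that eigenvalue. -/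
open Matrix BigOperators
open scoped Classical

/-! Let `G = C_p □ K_{r₁-1}`, a connected `r₁`-regular graph. If `A(G) w = μ w` and the entries
of `w` sum to zero, then `w`, extended by `0` at the apex of `H_v*` and placed on the `i`-th
pocket (zero elsewhere), is an eigenvector of `A(G*)` for `μ`: the only vertex outside the pocket
adjacent to it is `v_i`, and it sees the sum of the entries of `w`. These `k` vectors have disjoint
supports, so `μ` has multiplicity at least `k`. The entries of `w` do sum to zero whenever
`μ ≠ r₁`, because the column sums of `A(G)` all equal `r₁`; and `μ = r₁` is excluded in both parts
since, by connectedness, `r₁` is a simple eigenvalue of `A(G)` with constant eigenvectors. -/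

open Module Module.End Polynomial

section LinearAlgebra

variable {K n : Type*} [Field K] [Fintype n]

theorem Module.End.card_le_finrank_eigenspace {M ι : Type*} [AddCommGroup M] [Module K M]
    [FiniteDimensional K M] [Fintype ι] (φ : End K M) (μ : K) {v : ι → M}
    (hv : LinearIndependent K v) (hφv : ∀ i, φ (v i) = μ • v i) :
    Fintype.card ι ≤ finrank K (φ.eigenspace μ) := by
  rw [← finrank_span_eq_card hv]
  exact Submodule.finrank_mono <| Submodule.span_le.2 <| Set.range_subset_iff.2 fun i =>
    mem_eigenspace_iff.2 (hφv i)

theorem Matrix.card_le_count_roots_charpoly [DecidableEq n] {ι : Type*} [Fintype ι]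
    (A : Matrix n n K) (μ : K) {v : ι → n → K} (hv : LinearIndependent K v)
    (hAv : ∀ i, A *ᵥ v i = μ • v i) :
    Fintype.card ι ≤ A.charpoly.roots.count μ := by
  calc Fintype.card ι ≤ finrank K (eigenspace (toLin' A) μ) :=
        card_le_finrank_eigenspace (toLin' A) μ hv fun i => by simpa using hAv i
    _ ≤ (toLin' A).charpoly.rootMultiplicity μ := LinearMap.finrank_eigenspace_le _ _
    _ = A.charpoly.roots.count μ := by rw [Matrix.charpoly_toLin', count_roots]

theorem Matrix.exists_mulVec_eq_smul_of_mem_roots_charpoly [DecidableEq n] {A : Matrix n n K}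
    {μ : K} (hμ : μ ∈ A.charpoly.roots) : ∃ x, x ≠ 0 ∧ A *ᵥ x = μ • x := by
  have : HasEigenvalue (toLin' A) μ := by
    rw [hasEigenvalue_iff_isRoot_charpoly, Matrix.charpoly_toLin']
    exact isRoot_of_mem_roots hμ
  obtain ⟨x, hx, hx0⟩ := this.exists_hasEigenvector
  exact ⟨x, hx0, by simpa using mem_eigenspace_iff.1 hx⟩

theorem Matrix.IsHermitian.count_roots_charpoly_le_finrank_eigenspace [DecidableEq n]
    {A : Matrix n n ℝ} (hA : A.IsHermitian) (μ : ℝ) :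
    A.charpoly.roots.count μ ≤ finrank ℝ (eigenspace (toLin' A) μ) := by
  rw [hA.roots_charpoly_eq_eigenvalues, Multiset.count_map, ← Finset.filter_val,
    Finset.card_val, ← Fintype.card_subtype]
  refine card_le_finrank_eigenspace (toLin' A) μ
    (v := fun i : {i // μ = _} => ⇑(hA.eigenvectorBasis i)) ?_ ?_
  · exact ((hA.eigenvectorBasis.orthonormal.linearIndependent.comp _ Subtype.val_injective).map'
      (WithLp.linearEquiv 2 ℝ (n → ℝ)).toLinearMap (WithLp.linearEquiv 2 ℝ (n → ℝ)).ker)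
  · rintro ⟨i, hi⟩
    simp [hA.mulVec_eigenvectorBasis, hi]

theorem Matrix.sum_eq_zero_of_mulVec_eq_smul {A : Matrix n n K} {r μ : K}
    (hA : ∀ j, ∑ i, A i j = r) {x : n → K} (hx : A *ᵥ x = μ • x) (hμ : μ ≠ r) :
    ∑ i, x i = 0 := by
  have h : μ * ∑ i, x i = r * ∑ i, x i := calc
    μ * ∑ i, x i = ∑ i, (A *ᵥ x) i := by simp [hx, Finset.mul_sum]
    _ = ∑ j, (∑ i, A i j) * x j := by
      simp only [mulVec, dotProduct, Finset.sum_mul]; exact Finset.sum_comm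
    _ = r * ∑ i, x i := by simp [hA, Finset.mul_sum]
  by_contra hs
  exact hμ (mul_right_cancel₀ hs h)

end LinearAlgebra

section AdjacencyMatrix

open SimpleGraph

variable {V : Type*} [Fintype V]

theorem adjMat_eq_adjMatrix (R : Type*) [Zero R] [One R] (G : SimpleGraph V)
    [DecidableRel G.Adj] : adjMat R G = G.adjMatrix R := by
  ext x y
  simp only [adjMat, Matrix.of_apply, adjMatrix_apply]
  congr

theorem aSpec_eq_roots_charpoly [DecidableEq V] (G : SimpleGraph V) :
    aSpec G = (adjMat ℝ G).charpoly.roots := by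
  unfold aSpec
  congr!

theorem isHermitian_adjMat (G : SimpleGraph V) : (adjMat ℝ G).IsHermitian := by
  rw [adjMat_eq_adjMatrix]
  exact isHermitian_adjMatrix ℝ G

theorem sum_adjMat_apply (R : Type*) [NonAssocSemiring R] (G : SimpleGraph V) [G.LocallyFinite]
    (v : V) : ∑ u, adjMat R G u v = G.degree v := by
  have := G.adjMatrix_vecMul_apply v (1 : V → R)
  simp only [vecMul, dotProduct, Pi.one_apply, one_mul, Finset.sum_const, nsmul_one] at this
  rw [adjMat_eq_adjMatrix, this]
  congr 1
  convert card_neighborFinset_eq_degree G v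

theorem exists_eq_const_of_adjMat_mulVec_eq {G : SimpleGraph V} [G.LocallyFinite] {d : ℕ}
    (hconn : G.Connected) (hreg : G.IsRegularOfDegree d) {x : V → ℝ}
    (hx : adjMat ℝ G *ᵥ x = (d : ℝ) • x) :
    ∃ c, x = fun _ => c := by
  classical
  have hlap : G.lapMatrix ℝ *ᵥ x = 0 := by
    ext v
    rw [lapMatrix, sub_mulVec, Pi.sub_apply, degMatrix_mulVec_apply, ← adjMat_eq_adjMatrix, hx,
      Pi.smul_apply, smul_eq_mul, Pi.zero_apply, sub_eq_zero]
    congr 2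
    convert hreg v
  obtain ⟨v₀⟩ := hconn.nonempty
  exact ⟨x v₀, funext fun v =>
    (lapMatrix_mulVec_eq_zero_iff_forall_reachable G).1 hlap v v₀ (hconn.preconnected v v₀)⟩

theorem sum_eq_zero_of_adjMat_mulVec_eq {G : SimpleGraph V} [G.LocallyFinite] {d : ℕ}
    (hreg : G.IsRegularOfDegree d) {x : V → ℝ} {μ : ℝ} (hx : adjMat ℝ G *ᵥ x = μ • x)
    (hμ : μ ≠ d) : ∑ v, x v = 0 :=
  (adjMat ℝ G).sum_eq_zero_of_mulVec_eq_smul (fun v => by rw [sum_adjMat_apply, hreg v]) hx hμ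

theorem sum_eq_zero_of_adjMat_mulVec_eq_of_not_const {G : SimpleGraph V} [G.LocallyFinite]
    {d : ℕ} (hconn : G.Connected) (hreg : G.IsRegularOfDegree d) {x : V → ℝ} {μ : ℝ}
    (hx : adjMat ℝ G *ᵥ x = μ • x) (hnc : ¬ ∃ c, x = fun _ => c) : ∑ v, x v = 0 :=
  sum_eq_zero_of_adjMat_mulVec_eq hreg hx fun hμ =>
    hnc (exists_eq_const_of_adjMat_mulVec_eq hconn hreg (hμ ▸ hx))

theorem count_degree_aSpec_le_one {G : SimpleGraph V} [G.LocallyFinite] {d : ℕ}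
    (hconn : G.Connected) (hreg : G.IsRegularOfDegree d) : (aSpec G).count (d : ℝ) ≤ 1 := by
  have : Nonempty V := hconn.nonempty
  calc (aSpec G).count (d : ℝ) ≤ finrank ℝ (eigenspace (toLin' (adjMat ℝ G)) d) :=
        (isHermitian_adjMat G).count_roots_charpoly_le_finrank_eigenspace _
    _ ≤ finrank ℝ (ℝ ∙ (1 : V → ℝ)) := Submodule.finrank_mono fun x hx => by
        obtain ⟨c, rfl⟩ :=
          exists_eq_const_of_adjMat_mulVec_eq hconn hreg (by simpa using mem_eigenspace_iff.1 hx)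
        exact Submodule.mem_span_singleton.2 ⟨c, by ext; simp⟩
    _ = 1 := finrank_span_singleton one_ne_zero

end AdjacencyMatrix

section BoxProduct

open SimpleGraph Kronecker

variable {R α β : Type*} [CommSemiring R] [Fintype α] [Fintype β]

theorem Matrix.kronecker_mulVec_prod (A : Matrix α α R) (B : Matrix β β R) (x : α → R)
    (y : β → R) :
    (A ⊗ₖ B) *ᵥ (fun q : α × β => x q.1 * y q.2) = fun q => (A *ᵥ x) q.1 * (B *ᵥ y) q.2 := by
  ext ⟨a, b⟩
  simp only [mulVec, dotProduct, kroneckerMap_apply, Fintype.sum_prod_type, Finset.sum_mul_sum]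
  exact Finset.sum_congr rfl fun _ _ => Finset.sum_congr rfl fun _ _ => by ring

theorem adjMat_boxProd [DecidableEq α] [DecidableEq β] (G : SimpleGraph α)
    (H : SimpleGraph β) : adjMat R (G □ H) = adjMat R G ⊗ₖ 1 + 1 ⊗ₖ adjMat R H := by
  ext ⟨a, b⟩ ⟨c, d⟩
  by_cases hac : a = c <;> by_cases hbd : b = d <;>
    simp [adjMat, kroneckerMap_apply, boxProd_adj, hac, hbd]

theorem adjMat_boxProd_mulVec_prod {G : SimpleGraph α} {H : SimpleGraph β} {x : α → R}
    {y : β → R} {μ ν : R} (hx : adjMat R G *ᵥ x = μ • x) (hy : adjMat R H *ᵥ y = ν • y) :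
    adjMat R (G □ H) *ᵥ (fun q : α × β => x q.1 * y q.2) =
      (μ + ν) • fun q : α × β => x q.1 * y q.2 := by
  classical
  rw [adjMat_boxProd, add_mulVec, Matrix.kronecker_mulVec_prod, Matrix.kronecker_mulVec_prod,
    hx, hy, one_mulVec, one_mulVec]
  ext q
  simp only [Pi.add_apply, Pi.smul_apply, smul_eq_mul]
  ring

theorem isRegularOfDegree_cycleGraph {p : ℕ} (hp : 3 ≤ p) :
    (cycleGraph p).IsRegularOfDegree 2 := by
  obtain ⟨n, rfl⟩ : ∃ n, p = n + 3 := ⟨p - 3, by omega⟩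
  intro v
  exact cycleGraph_degree_three_le

theorem isRegularOfDegree_cycleGraph_boxProd_top {p r : ℕ} (hp : 3 ≤ p) (hr : 2 ≤ r) :
    (cycleGraph p □ (⊤ : SimpleGraph (Fin (r - 1)))).IsRegularOfDegree r := by
  intro x
  rw [degree_boxProd, isRegularOfDegree_cycleGraph hp x.1, IsRegularOfDegree.top x.2,
    Fintype.card_fin]
  omega

theorem connected_cycleGraph_boxProd_top {p r : ℕ} (hp : 3 ≤ p) (hr : 2 ≤ r) :
    (cycleGraph p □ (⊤ : SimpleGraph (Fin (r - 1)))).Connected := by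
  obtain ⟨n, rfl⟩ : ∃ n, p = n + 1 := ⟨p - 1, by omega⟩
  have : Nonempty (Fin (r - 1)) := ⟨⟨0, by omega⟩⟩
  exact cycleGraph_connected.boxProd connected_top

end BoxProduct

section Pockets

variable {R V W α β : Type*} [Semiring R]

def pocketLift {k : ℕ} (v : W) (i : Fin k) (x : W → R) : V ⊕ (Fin k × {w : W // w ≠ v}) → R :=
  Sum.elim (fun _ => 0) fun jw => if i = jw.1 then x jw.2.1 else 0

theorem adjMat_sgJoin_mulVec_elim_zero [Fintype α] [Fintype β] (G₁ : SimpleGraph α)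
    {G₂ : SimpleGraph β} {x : β → R} {μ : R} (hx : adjMat R G₂ *ᵥ x = μ • x)
    (hsum : ∑ b, x b = 0) :
    adjMat R (sgJoin G₁ G₂) *ᵥ Sum.elim (fun _ => 0) x = μ • Sum.elim (fun _ => 0) x := by
  ext (a | b)
  · simp [mulVec, dotProduct, Fintype.sum_sum_type, adjMat, sgJoin, hsum]
  · simp only [mulVec, dotProduct, Fintype.sum_sum_type, Sum.elim_inl, Sum.elim_inr, mul_zero,
      Finset.sum_const_zero, zero_add]
    exact congrFun hx b

theorem sum_mul_pocketLift [Fintype V] [Fintype W] [DecidableEq W] {k : ℕ} (v : W) (i : Fin k)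
    (x : W → R) (M : V ⊕ (Fin k × {w : W // w ≠ v}) → R) :
    ∑ y, M y * pocketLift v i x y = ∑ w : {w : W // w ≠ v}, M (Sum.inr (i, w)) * x w := by
  simp [pocketLift, Fintype.sum_sum_type, Fintype.sum_prod_type, mul_ite]

theorem adjMat_pocketGraph_mulVec_pocketLift [Fintype V] [Fintype W] [DecidableEq W]
    (F : SimpleGraph V) {H : SimpleGraph W} {v : W} {k : ℕ} (f : Fin k ↪ V) (i : Fin k)
    {x : W → R} {μ : R} (hx : adjMat R H *ᵥ x = μ • x)
    (hxv : x v = 0) :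
    adjMat R (pocketGraph F H v f) *ᵥ pocketLift v i x = μ • pocketLift v i x := by
  have hsub : ∀ u, ∑ w : {w : W // w ≠ v}, adjMat R H u w * x w = μ * x u := fun u => by
    rw [← Finset.sum_subtype (Finset.univ.erase v) (by simp) (fun w => adjMat R H u w * x w),
      Finset.sum_erase _ (by simp [hxv])]
    exact congrFun hx u
  ext (a | ⟨j, u⟩)
  · rw [mulVec, dotProduct, sum_mul_pocketLift]
    by_cases ha : a = f i
    · simpa [pocketLift, hxv, adjMat, pocketGraph, ha] using hsub v
    · simp [pocketLift, adjMat, pocketGraph, ha]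
  · rw [mulVec, dotProduct, sum_mul_pocketLift]
    by_cases hij : i = j
    · subst hij
      simpa [pocketLift, adjMat, pocketGraph] using hsub u
    · simp [pocketLift, adjMat, pocketGraph, hij, Ne.symm hij]

theorem adjMat_pocketGraph_sgJoin_mulVec_pocketLift [Fintype V] [Fintype W] [DecidableEq W]
    (F : SimpleGraph V) {G : SimpleGraph W} {k : ℕ} (f : Fin k ↪ V) (i : Fin k) {w : W → R}
    {μ : R} (hw : adjMat R G *ᵥ w = μ • w) (hsum : ∑ q, w q = 0) :
    adjMat R (pocketGraph F (sgJoin (⊤ : SimpleGraph Unit) G) (Sum.inl ()) f) *ᵥ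
        pocketLift (Sum.inl ()) i (Sum.elim (fun _ => 0) w) =
      μ • pocketLift (Sum.inl ()) i (Sum.elim (fun _ => 0) w) :=
  adjMat_pocketGraph_mulVec_pocketLift F f i (adjMat_sgJoin_mulVec_elim_zero ⊤ hw hsum) rfl

theorem linearIndependent_pocketLift {S : Type*} [Ring S] [NoZeroDivisors S] {k : ℕ} {v w : W}
    {x : W → S} (hw : w ≠ v) (hxw : x w ≠ 0) :
    LinearIndependent S fun i : Fin k => pocketLift (V := V) v i x := by
  rw [Fintype.linearIndependent_iff]
  intro c hc i
  simpa [pocketLift, hxw] using congrFun hc (Sum.inr (i, ⟨w, hw⟩))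

end Pockets

theorem adj_eigenvectors_pocketGraph_cycleCompleteModel_general
    {V : Type*} [Fintype V]
    (k p r₁ : ℕ) (hp : 3 ≤ p) (hr₁ : 2 ≤ r₁)
    (F : SimpleGraph V) (f : Fin k ↪ V) :
    (∀ μ : ℝ,
        μ ∈ (aSpec ((SimpleGraph.cycleGraph p).boxProd
              (⊤ : SimpleGraph (Fin (r₁ - 1))))).erase (r₁ : ℝ) →
        k ≤ Multiset.count μ (aSpec (pocketGraph F
              (sgJoin (⊤ : SimpleGraph Unit)
                ((SimpleGraph.cycleGraph p).boxProd (⊤ : SimpleGraph (Fin (r₁ - 1)))))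
              (Sum.inl ()) f)))
    ∧ (∀ (X : Fin p → ℝ) (Y : Fin (r₁ - 1) → ℝ) (lams lamt : ℝ),
        X ≠ 0 → Y ≠ 0 →
        (adjMat ℝ (SimpleGraph.cycleGraph p)).mulVec X = lams • X →
        (adjMat ℝ (⊤ : SimpleGraph (Fin (r₁ - 1)))).mulVec Y = lamt • Y →
        (¬ ∃ c : ℝ, (fun q : Fin p × Fin (r₁ - 1) => X q.1 * Y q.2) = fun _ => c) →
        ∀ Z : Fin k →
            (V ⊕ (Fin k × {w : Unit ⊕ (Fin p × Fin (r₁ - 1)) // w ≠ Sum.inl ()})) → ℝ,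
          Z = (fun i x =>
            Sum.elim (fun _ => (0 : ℝ))
              (fun jw : Fin k × {w : Unit ⊕ (Fin p × Fin (r₁ - 1)) // w ≠ Sum.inl ()} =>
                if i = jw.1 then
                  Sum.elim (fun _ => (0 : ℝ)) (fun q => X q.1 * Y q.2) jw.2.1
                else 0) x) →
          (∀ i : Fin k,
            (adjMat ℝ (pocketGraph F
                (sgJoin (⊤ : SimpleGraph Unit)
                  ((SimpleGraph.cycleGraph p).boxProd (⊤ : SimpleGraph (Fin (r₁ - 1)))))
                (Sum.inl ()) f)).mulVec (Z i) = (lams + lamt) • Z i)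
          ∧ LinearIndependent ℝ Z) := by
  set G := SimpleGraph.cycleGraph p □ (⊤ : SimpleGraph (Fin (r₁ - 1)))
  have hconn : G.Connected := connected_cycleGraph_boxProd_top hp hr₁
  have hreg : G.IsRegularOfDegree r₁ := isRegularOfDegree_cycleGraph_boxProd_top hp hr₁
  refine ⟨fun μ hμ => ?_, fun X Y lams lamt _ _ hX hY hnc Z hZ => ?_⟩
  · have hμr : μ ≠ r₁ := by
      intro h
      have := Multiset.count_pos.2 (h ▸ hμ)
      rw [Multiset.count_erase_self] at this
      have := count_degree_aSpec_le_one hconn hreg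
      omega
    rw [aSpec_eq_roots_charpoly] at hμ ⊢
    obtain ⟨w, hw0, hw⟩ :=
      exists_mulVec_eq_smul_of_mem_roots_charpoly (Multiset.mem_of_mem_erase hμ)
    obtain ⟨q, hq⟩ := Function.ne_iff.1 hw0
    simpa using card_le_count_roots_charpoly _ μ (linearIndependent_pocketLift Sum.inr_ne_inl hq)
      (adjMat_pocketGraph_sgJoin_mulVec_pocketLift F f · hw
        (sum_eq_zero_of_adjMat_mulVec_eq hreg hw hμr))
  · subst hZ
    have hw := adjMat_boxProd_mulVec_prod hX hY
    obtain ⟨q, hq⟩ : ∃ q : Fin p × Fin (r₁ - 1), X q.1 * Y q.2 ≠ 0 := by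
      by_contra! h
      exact hnc ⟨0, funext h⟩
    exact ⟨(adjMat_pocketGraph_sgJoin_mulVec_pocketLift F f · hw
        (sum_eq_zero_of_adjMat_mulVec_eq_of_not_const hconn hreg hw hnc)),
      linearIndependent_pocketLift Sum.inr_ne_inl hq⟩

/-- eigenvalues/eigenvectors of `A(G*)` coming from the copies of
`G_p^{r₁} = C_p □ K_{r₁−1}`. -/
theorem adj_eigenvectors_pocketGraph_cycleCompleteModel
    {V : Type*} [Fintype V] [DecidableEq V]
    (m k p r₁ : ℕ) (hp : 3 ≤ p) (hr₁ : 2 ≤ r₁) (hmp : m - 1 = p * (r₁ - 1))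
    (F : SimpleGraph V) (f : Fin k ↪ V) :
    (∀ μ : ℝ,
        μ ∈ (aSpec ((SimpleGraph.cycleGraph p).boxProd
              (⊤ : SimpleGraph (Fin (r₁ - 1))))).erase (r₁ : ℝ) →
        k ≤ Multiset.count μ (aSpec (pocketGraph F
              (sgJoin (⊤ : SimpleGraph Unit)
                ((SimpleGraph.cycleGraph p).boxProd (⊤ : SimpleGraph (Fin (r₁ - 1)))))
              (Sum.inl ()) f)))
    ∧ (∀ (X : Fin p → ℝ) (Y : Fin (r₁ - 1) → ℝ) (lams lamt : ℝ),
        X ≠ 0 → Y ≠ 0 →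
        (adjMat ℝ (SimpleGraph.cycleGraph p)).mulVec X = lams • X →
        (adjMat ℝ (⊤ : SimpleGraph (Fin (r₁ - 1)))).mulVec Y = lamt • Y →
        (¬ ∃ c : ℝ, (fun q : Fin p × Fin (r₁ - 1) => X q.1 * Y q.2) = fun _ => c) →
        ∀ Z : Fin k →
            (V ⊕ (Fin k × {w : Unit ⊕ (Fin p × Fin (r₁ - 1)) // w ≠ Sum.inl ()})) → ℝ,
          Z = (fun i x =>
            Sum.elim (fun _ => (0 : ℝ))
              (fun jw : Fin k × {w : Unit ⊕ (Fin p × Fin (r₁ - 1)) // w ≠ Sum.inl ()} =>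
                if i = jw.1 then
                  Sum.elim (fun _ => (0 : ℝ)) (fun q => X q.1 * Y q.2) jw.2.1
                else 0) x) →
          (∀ i : Fin k,
            (adjMat ℝ (pocketGraph F
                (sgJoin (⊤ : SimpleGraph Unit)
                  ((SimpleGraph.cycleGraph p).boxProd (⊤ : SimpleGraph (Fin (r₁ - 1)))))
                (Sum.inl ()) f)).mulVec (Z i) = (lams + lamt) • Z i)
          ∧ LinearIndependent ℝ Z) :=
  adj_eigenvectors_pocketGraph_cycleCompleteModel_general k p r₁ hp hr₁ F f
end
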